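/- The second mutual-exclusion system (Example 2) violates non-starvation for process 1 even under fairness: there exist a fair event stream es and a position i such that the trace σ of es under step2 from initial state (T,T) has first component (σ i).1 = W and (σ j).1 ≠ U for all j ≥ i. In fact, for every event stream es with es 0 = Request1 and es 1 = Request2 (and fair such streams exist), σ j = (W,W) for all j ≥ 2. -/

import Mathlib

inductive ProcState : Type where
  | T | W | U
deriving DecidableEq

inductive Event : Type where
  | request1 | request2 | take1 | take2 | release1 | release2
deriving DecidableEq

/-- The trace of an event stream under a transition function from an initial state. -/
def trace {S : Type} (step : Event → S → S) (s0 : S) (es : ℕ → Event) : ℕ → S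
  | 0 => s0
  | n + 1 => step (es n) (trace step s0 es n)

/-- An event stream is fair if every event occurs infinitely often. -/
def Fair (es : ℕ → Event) : Prop := ∀ (e : Event) (n : ℕ), ∃ m, n ≤ m ∧ es m = e

/-- Transition function of Example 2. -/
def step2 : Event → ProcState × ProcState → ProcState × ProcState
  | .request1, (s1, s2) => if s1 = ProcState.T then (.W, s2) else (s1, s2)
  | .request2, (s1, s2) => if s2 = ProcState.T then (s1, .W) else (s1, s2)
  | .take1, (s1, s2) => if s1 = ProcState.W ∧ s2 = ProcState.T then (.U, s2) else (s1, s2)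
  | .take2, (s1, s2) => if s2 = ProcState.W ∧ s1 = ProcState.T then (s1, .U) else (s1, s2)
  | .release1, (s1, s2) => if s1 = ProcState.U then (.T, s2) else (s1, s2)
  | .release2, (s1, s2) => if s2 = ProcState.U then (s1, .T) else (s1, s2)

open ProcState Event

theorem trace_eq_of_forall_step_eq {S : Type} {step : Event → S → S} {s0 s : S}
    {es : ℕ → Event} (hs : ∀ e, step e s = s) {n j : ℕ}
    (hn : trace step s0 es n = s) (hnj : n ≤ j) : trace step s0 es j = s := by
  induction j, hnj using Nat.le_induction with
  | base => exact hn
  | succ k _ ih => rw [trace, ih, hs]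

theorem fair_comp_mod {p : ℕ} {f : ℕ → Event} (hf : ∀ e, ∃ k < p, f k = e) :
    Fair (fun n => f (n % p)) := by
  intro e n
  obtain ⟨k, hkp, hk⟩ := hf e
  refine ⟨p * n + k, ?_, ?_⟩
  · nlinarith
  · simp [Nat.mod_eq_of_lt hkp, hk]

def eventOfIndex : ℕ → Event
  | 0 => request1
  | 1 => request2
  | 2 => take1
  | 3 => take2
  | 4 => release1
  | _ => release2

def roundRobin (n : ℕ) : Event := eventOfIndex (n % 6)

theorem fair_roundRobin : Fair roundRobin :=
  fair_comp_mod fun e => by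
    cases e
    exacts [⟨0, by norm_num, rfl⟩, ⟨1, by norm_num, rfl⟩, ⟨2, by norm_num, rfl⟩,
      ⟨3, by norm_num, rfl⟩, ⟨4, by norm_num, rfl⟩, ⟨5, by norm_num, rfl⟩]

/-- `(W, W)` is a deadlock: each `take` needs the other process to be thinking. -/
theorem step2_W_W (e : Event) : step2 e (W, W) = (W, W) := by
  cases e <;> simp [step2]

theorem trace_step2_eq_W_W {es : ℕ → Event} (h0 : es 0 = request1) (h1 : es 1 = request2)
    {j : ℕ} (hj : 2 ≤ j) : trace step2 (T, T) es j = (W, W) :=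
  trace_eq_of_forall_step_eq step2_W_W (by simp [trace, h0, h1, step2]) hj

/-- Example 2 violates non-starvation for process 1 even under fairness: there is a
fair event stream and a position where process 1 is waiting but never gets to use
the critical resource.  In fact any stream starting `Request1, Request2` deadlocks
in `(W, W)` from position `2` onwards, and fair such streams exist. -/
theorem example2_violates_non_starvation :
    (∃ es : ℕ → Event, Fair es ∧ ∃ i : ℕ,
      (trace step2 (ProcState.T, ProcState.T) es i).1 = ProcState.W ∧
      ∀ j, i ≤ j → (trace step2 (ProcState.T, ProcState.T) es j).1 ≠ ProcState.U) ∧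
    (∀ es : ℕ → Event, es 0 = Event.request1 → es 1 = Event.request2 →
      ∀ j, 2 ≤ j →
        trace step2 (ProcState.T, ProcState.T) es j = (ProcState.W, ProcState.W)) ∧
    (∃ es : ℕ → Event, Fair es ∧ es 0 = Event.request1 ∧ es 1 = Event.request2) := by
  have deadlock {j : ℕ} (hj : 2 ≤ j) : trace step2 (T, T) roundRobin j = (W, W) :=
    trace_step2_eq_W_W rfl rfl hj
  refine ⟨⟨roundRobin, fair_roundRobin, 2, ?_, fun j hj => ?_⟩,
    fun _ h0 h1 _ hj => trace_step2_eq_W_W h0 h1 hj, ⟨roundRobin, fair_roundRobin, rfl, rfl⟩⟩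
  · rw [deadlock le_rfl]
  · rw [deadlock hj]
    decide
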